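/- (Conditioning of Gaussian possibility functions) Let (θ, ψ) be jointly described by the Gaussian possibility function N̄((μ_θ, μ_ψ), Σ) on ℝⁿ × ℝᵐ with Σ positive definite and block decomposition Σ = [[Σ_θθ, Σ_θψ],[Σ_ψθ, Σ_ψψ]]. Then the conditional possibility function f(θ|ψ) = f(θ,ψ)/sup_{θ'} f(θ',ψ) equals N̄(θ; μ_θ + Σ_θψΣ_ψψ⁻¹(ψ - μ_ψ), Σ_θθ - Σ_θψΣ_ψψ⁻¹Σ_ψθ), and the marginal sup_{θ'} f(θ', ψ) equals N̄(ψ; μ_ψ, Σ_ψψ). -/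

import Mathlib

open Matrix

/-- The Gaussian possibility function, over an arbitrary finite index type. -/
noncomputable def gaussPoss' {ι : Type*} [Fintype ι] [DecidableEq ι] (μ : ι → ℝ) (S : Matrix ι ι ℝ)
    (θ : ι → ℝ) : ℝ :=
  Real.exp (-(1/2) * ((θ - μ) ⬝ᵥ (S⁻¹ *ᵥ (θ - μ))))

theorem quadId {n m : ℕ} (B : Matrix (Fin n) (Fin m) ℝ) {D : Matrix (Fin m) (Fin m) ℝ}
    {S : Matrix (Fin n) (Fin n) ℝ} (hD : D⁻¹.IsHermitian)
    (u : Fin n → ℝ) (v : Fin m → ℝ) :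
    Sum.elim u v ⬝ᵥ ((fromBlocks S⁻¹ (-(S⁻¹*B*D⁻¹)) (-(D⁻¹*Bᴴ*S⁻¹)) (D⁻¹ + D⁻¹*Bᴴ*S⁻¹*B*D⁻¹)) *ᵥ Sum.elim u v)
      = (u - (B*D⁻¹) *ᵥ v) ⬝ᵥ (S⁻¹ *ᵥ (u - (B*D⁻¹) *ᵥ v)) + v ⬝ᵥ (D⁻¹ *ᵥ v) := by
  have h1 : v ᵥ* D⁻¹ = D⁻¹ *ᵥ v := by
    rw [← vecMul_transpose, show D⁻¹ᵀ = D⁻¹ from by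
      rw [← conjTranspose_eq_transpose_of_trivial, hD.eq]]
  have h2 : ∀ x : Fin m → ℝ, x ᵥ* Bᴴ = B *ᵥ x := fun x => by
    rw [conjTranspose_eq_transpose_of_trivial, vecMul_transpose]
  simp only [fromBlocks_mulVec, sumElim_dotProduct_sumElim, Matrix.add_mulVec,
    Matrix.neg_mulVec, mulVec_sub, mulVec_add, dotProduct_add, dotProduct_sub,
    sub_dotProduct, dotProduct_neg, ← mulVec_mulVec, dotProduct_mulVec,
    Sum.elim_comp_inl, Sum.elim_comp_inr, vecMul_sub, sub_vecMul, h1, h2]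
  ring

/-- conditioning of a joint Gaussian possibility function with block
covariance [[A, B], [C, D]]: the marginal in ψ is N̄(μ_ψ, D) and the conditional in θ
given ψ is N̄(μ_θ + BD⁻¹(ψ - μ_ψ), A - BD⁻¹C). -/
theorem gaussPoss_conditioning {n m : ℕ}
    (μθ : Fin n → ℝ) (μψ : Fin m → ℝ)
    (A : Matrix (Fin n) (Fin n) ℝ) (B : Matrix (Fin n) (Fin m) ℝ)
    (C : Matrix (Fin m) (Fin n) ℝ) (D : Matrix (Fin m) (Fin m) ℝ)
    (hpos : (Matrix.fromBlocks A B C D).PosDef) :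
    ∀ (θ : Fin n → ℝ) (ψ : Fin m → ℝ),
      (⨆ θ' : Fin n → ℝ,
          gaussPoss' (Sum.elim μθ μψ) (Matrix.fromBlocks A B C D) (Sum.elim θ' ψ))
        = gaussPoss' μψ D ψ ∧
      gaussPoss' (Sum.elim μθ μψ) (Matrix.fromBlocks A B C D) (Sum.elim θ ψ)
          / (⨆ θ' : Fin n → ℝ,
              gaussPoss' (Sum.elim μθ μψ) (Matrix.fromBlocks A B C D) (Sum.elim θ' ψ))
        = gaussPoss' (μθ + (B * D⁻¹) *ᵥ (ψ - μψ)) (A - B * D⁻¹ * C) θ := by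
  obtain ⟨hA, rfl, -, hDh⟩ := isHermitian_fromBlocks_iff.mp hpos.isHermitian
  intro θ ψ
  -- D is positive definite
  have hDpos : D.PosDef := by
    refine .of_dotProduct_mulVec_pos hDh fun y hy => ?_
    have hne : Sum.elim (0 : Fin n → ℝ) y ≠ 0 := fun h =>
      hy (funext fun i => congrFun h (Sum.inr i))
    have := hpos.dotProduct_mulVec_pos hne
    simpa [fromBlocks_mulVec, sumElim_dotProduct_sumElim] using this
  letI : Invertible D := hDpos.isUnit.invertible
  letI : Invertible (fromBlocks A B Bᴴ D) := hpos.isUnit.invertible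
  letI iS' : Invertible (A - B * ⅟D * Bᴴ) := invertibleOfFromBlocks₂₂Invertible A B Bᴴ D
  have hDinv : (⅟D : Matrix (Fin m) (Fin m) ℝ) = D⁻¹ := invOf_eq_nonsing_inv D
  letI iS : Invertible (A - B * D⁻¹ * Bᴴ) := hDinv ▸ iS'
  have hSsemi : (A - B * D⁻¹ * Bᴴ).PosSemidef :=
    (PosDef.fromBlocks₂₂ A B hDpos).mp hpos.posSemidef
  have hMinv : (fromBlocks A B Bᴴ D)⁻¹ =
      fromBlocks (A - B * D⁻¹ * Bᴴ)⁻¹ (-((A - B * D⁻¹ * Bᴴ)⁻¹*B*D⁻¹))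
        (-(D⁻¹*Bᴴ*(A - B * D⁻¹ * Bᴴ)⁻¹))
        (D⁻¹ + D⁻¹*Bᴴ*(A - B * D⁻¹ * Bᴴ)⁻¹*B*D⁻¹) := by
    rw [← invOf_eq_nonsing_inv, invOf_fromBlocks₂₂_eq]
    simp only [invOf_eq_nonsing_inv, hDinv]
  set S := A - B * D⁻¹ * Bᴴ with hSdef
  -- quadratic form identity
  have hsub : ∀ (a c : Fin n → ℝ) (b d : Fin m → ℝ),
      Sum.elim a b - Sum.elim c d = Sum.elim (a - c) (b - d) := by
    intros a c b d; funext x; cases x <;> simp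
  set v : Fin m → ℝ := ψ - μψ with hv
  set c : ℝ := v ⬝ᵥ (D⁻¹ *ᵥ v) with hc
  set w : (Fin n → ℝ) → (Fin n → ℝ) := fun θ' => (θ' - μθ) - (B*D⁻¹) *ᵥ v with hw
  have hjoint : ∀ θ' : Fin n → ℝ,
      gaussPoss' (Sum.elim μθ μψ) (fromBlocks A B Bᴴ D) (Sum.elim θ' ψ)
        = Real.exp (-(1/2) * ((w θ') ⬝ᵥ (S⁻¹ *ᵥ (w θ')) + c)) := by
    intro θ'
    unfold gaussPoss'
    rw [hsub, hMinv, quadId B hDh.inv]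
  have hq : ∀ θ', 0 ≤ (w θ') ⬝ᵥ (S⁻¹ *ᵥ (w θ')) := fun θ' => by
    simpa using hSsemi.inv.dotProduct_mulVec_nonneg (w θ')
  have hsup : (⨆ θ' : Fin n → ℝ,
      gaussPoss' (Sum.elim μθ μψ) (fromBlocks A B Bᴴ D) (Sum.elim θ' ψ))
        = Real.exp (-(1/2) * c) := by
    apply le_antisymm
    · refine ciSup_le fun θ' => ?_
      rw [hjoint θ']
      apply Real.exp_le_exp.2
      nlinarith [hq θ']
    · have hb : BddAbove (Set.range fun θ' : Fin n → ℝ =>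
          gaussPoss' (Sum.elim μθ μψ) (fromBlocks A B Bᴴ D) (Sum.elim θ' ψ)) := by
        refine ⟨Real.exp (-(1/2) * c), Set.forall_mem_range.mpr fun θ' => ?_⟩
        rw [hjoint θ']
        apply Real.exp_le_exp.2
        nlinarith [hq θ']
      have hle := le_ciSup hb (μθ + (B*D⁻¹) *ᵥ v)
      have h0 : w (μθ + (B*D⁻¹) *ᵥ v) = 0 := by
        rw [hw]; simp [add_sub_cancel_left]
      rw [hjoint, h0] at hle
      simpa using hle
  refine ⟨hsup, ?_⟩
  rw [hjoint θ, hsup, ← Real.exp_sub]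
  have hθ : θ - (μθ + (B * D⁻¹) *ᵥ (ψ - μψ)) = w θ := by
    rw [hw, hv, sub_add_eq_sub_sub]
  unfold gaussPoss'
  rw [hθ]
  congr 1
  ring
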